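/- Let G = (V, E, w) be a weighted directed graph with integer weights and no negative-weight cycle, let n = |V| ≥ 1, and let s ∈ V be such that every vertex of V is reachable from s by a walk. Suppose φ : V → ℤ satisfies 2n·w(u,v) + φ(u) − φ(v) ≥ −1 for every (u,v) ∈ E. Define G* = (V, E, w*) with w*(u,v) = 2n·w(u,v) + φ(u) − φ(v) + 1, so that all weights of G* are nonnegative. Then for every v ∈ V, dist_G(s, v) = ⌊(dist_{G*}(s, v) − φ(s) + φ(v)) / (2n)⌋. -/
import Mathlib


open Real

/-- A walk from `u` to `v` along the edge set `E`; the list records the vertices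
visited after `u` (so `[]` is the empty walk, requiring `u = v`). -/
def IsWalk {V : Type*} (E : Set (V × V)) : V → V → List V → Prop
  | u, v, [] => u = v
  | u, v, x :: xs => (u, x) ∈ E ∧ IsWalk E x v xs

/-- The weight of a walk starting at `u` whose subsequent vertices are given by the list. -/
def walkWeight {V : Type*} (w : V × V → ℤ) : V → List V → ℤ
  | _, [] => 0
  | u, x :: xs => w (u, x) + walkWeight w x xs

/-- The number of negative-weight edges on a walk. -/
def countNeg {V : Type*} (w : V × V → ℤ) : V → List V → ℕ
  | _, [] => 0
  | u, x :: xs => (if w (u, x) < 0 then 1 else 0) + countNeg w x xs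

/-- `dist_G(u,v) ≤ r` : there exists a walk from `u` to `v` of weight at most `r`. -/
def DistLE {V : Type*} (E : Set (V × V)) (w : V × V → ℤ) (u v : V) (r : ℝ) : Prop :=
  ∃ p, IsWalk E u v p ∧ (walkWeight w u p : ℝ) ≤ r

/-- `Ball^in_G(v, r) = {u : dist_G(u,v) ≤ r}`. -/
def ballIn {V : Type*} (E : Set (V × V)) (w : V × V → ℤ) (v : V) (r : ℝ) : Set V :=
  {u | DistLE E w u v r}

/-- `Ball^out_G(u, r) = {v : dist_G(u,v) ≤ r}`. -/
def ballOut {V : Type*} (E : Set (V × V)) (w : V × V → ℤ) (u : V) (r : ℝ) : Set V :=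
  {v | DistLE E w u v r}

/-- There is a walk from `u` to `v`. -/
def Reach {V : Type*} (E : Set (V × V)) (u v : V) : Prop := ∃ p, IsWalk E u v p

/-- `u` and `v` lie in the same strongly connected component. -/
def SameSCC {V : Type*} (E : Set (V × V)) (u v : V) : Prop := Reach E u v ∧ Reach E v u

/-- `C` is a strongly connected component (an equivalence class of `SameSCC`). -/
def IsSCCOf {V : Type*} (E : Set (V × V)) (C : Set V) : Prop :=
  ∃ v, C = {u | SameSCC E u v}

/-- `D` is the (attained) minimum weight of a walk from `u` to `v`. -/
def IsMinDist {V : Type*} (E : Set (V × V)) (w : V × V → ℤ) (u v : V) (D : ℤ) : Prop :=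
  (∃ p, IsWalk E u v p ∧ walkWeight w u p = D) ∧
    ∀ p, IsWalk E u v p → D ≤ walkWeight w u p

section Aux

variable {V : Type*} {E : Set (V × V)} {w : V × V → ℤ}

lemma isWalk_append : ∀ {p : List V} {u m v : V} {q : List V},
    IsWalk E u m p → IsWalk E m v q → IsWalk E u v (p ++ q)
  | [], u, m, v, q, h1, h2 => by cases h1; exact h2
  | x :: xs, u, m, v, q, h1, h2 => ⟨h1.1, isWalk_append h1.2 h2⟩

lemma walkWeight_append : ∀ {p : List V} {u m : V}, IsWalk E u m p → ∀ q : List V,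
    walkWeight w u (p ++ q) = walkWeight w u p + walkWeight w m q
  | [], u, m, h1, q => by cases h1; simp [walkWeight]
  | x :: xs, u, m, h1, q => by
      show w (u, x) + walkWeight w x (xs ++ q)
        = w (u, x) + walkWeight w x xs + walkWeight w m q
      rw [walkWeight_append h1.2 q, add_assoc]

lemma walk_split_mid : ∀ {q : List V} {u v c : V} {r : List V},
    IsWalk E u v (q ++ c :: r) → IsWalk E u c (q ++ [c]) ∧ IsWalk E c v r
  | [], u, v, c, r, h => ⟨⟨h.1, rfl⟩, h.2⟩
  | x :: xs, u, v, c, r, h => by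
      obtain ⟨h1, h2⟩ := walk_split_mid (q := xs) h.2
      exact ⟨⟨h.1, h1⟩, h2⟩

lemma walkWeight_split_mid : ∀ (q : List V) (u c : V) (r : List V),
    walkWeight w u (q ++ c :: r) = walkWeight w u (q ++ [c]) + walkWeight w c r
  | [], u, c, r => by simp [walkWeight]
  | x :: xs, u, c, r => by
      show w (u, x) + walkWeight w x (xs ++ c :: r)
        = w (u, x) + walkWeight w x (xs ++ [c]) + walkWeight w c r
      rw [walkWeight_split_mid xs x c r, add_assoc]

lemma exists_dup_decomp : ∀ {l : List V}, ¬ l.Nodup →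
    ∃ (a : V) (l₁ l₂ l₃ : List V), l = l₁ ++ a :: (l₂ ++ a :: l₃)
  | [], h => absurd List.nodup_nil h
  | x :: xs, h => by
      by_cases hx : x ∈ xs
      · obtain ⟨s, t, rfl⟩ := List.append_of_mem hx
        exact ⟨x, [], s, t, rfl⟩
      · have hxs : ¬ xs.Nodup := fun hnd => h (List.nodup_cons.2 ⟨hx, hnd⟩)
        obtain ⟨a, l₁, l₂, l₃, rfl⟩ := exists_dup_decomp hxs
        exact ⟨a, x :: l₁, l₂, l₃, rfl⟩

lemma walk_shorten (hcyc : ∀ (c : V) (q : List V), IsWalk E c c q → 0 ≤ walkWeight w c q)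
    {u v : V} : ∀ (k : ℕ) (p : List V), p.length ≤ k → IsWalk E u v p →
    ∃ q, IsWalk E u v q ∧ walkWeight w u q ≤ walkWeight w u p ∧ (u :: q).Nodup := by
  intro k
  induction k with
  | zero =>
      intro p hl hp
      match p, hl with
      | [], _ => exact ⟨[], hp, le_refl _, by simp⟩
  | succ k ih =>
      intro p hl hp
      by_cases hnd : (u :: p).Nodup
      · exact ⟨p, hp, le_refl _, hnd⟩
      · obtain ⟨a, l₁, l₂, l₃, hdec⟩ := exists_dup_decomp hnd
        match l₁, hdec with
        | [], hdec =>
            rw [List.nil_append] at hdec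
            injection hdec with h1 h2
            subst h1; subst h2
            obtain ⟨hcycw, h3⟩ := walk_split_mid (q := l₂) (c := u) (r := l₃) hp
            have hnn := hcyc _ _ hcycw
            have hwt : walkWeight w u (l₂ ++ u :: l₃)
                = walkWeight w u (l₂ ++ [u]) + walkWeight w u l₃ :=
              walkWeight_split_mid l₂ u u l₃
            have hlen : l₃.length ≤ k := by
              have h := hl
              rw [List.length_append, List.length_cons] at h
              omega
            obtain ⟨q, hq1, hq2, hq3⟩ := ih l₃ hlen h3
            exact ⟨q, hq1, by omega, hq3⟩
        | x :: l₁', hdec =>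
            rw [List.cons_append] at hdec
            injection hdec with h1 h2
            subst h1; subst h2
            obtain ⟨h1, h2⟩ :=
              walk_split_mid (q := l₁') (c := a) (r := l₂ ++ a :: l₃) hp
            obtain ⟨hcycw, h3⟩ := walk_split_mid (q := l₂) (c := a) (r := l₃) h2
            have hnn := hcyc _ _ hcycw
            have hwt1 : walkWeight w u (l₁' ++ a :: (l₂ ++ a :: l₃))
                = walkWeight w u (l₁' ++ [a]) + walkWeight w a (l₂ ++ a :: l₃) :=
              walkWeight_split_mid l₁' u a _
            have hwt2 : walkWeight w a (l₂ ++ a :: l₃)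
                = walkWeight w a (l₂ ++ [a]) + walkWeight w a l₃ :=
              walkWeight_split_mid l₂ a a l₃
            have hwalk : IsWalk E u v ((l₁' ++ [a]) ++ l₃) := isWalk_append h1 h3
            have hwt3 : walkWeight w u ((l₁' ++ [a]) ++ l₃)
                = walkWeight w u (l₁' ++ [a]) + walkWeight w a l₃ :=
              walkWeight_append h1 l₃
            have hlen : ((l₁' ++ [a]) ++ l₃).length ≤ k := by
              have h := hl
              rw [List.length_append, List.length_cons, List.length_append,
                List.length_cons] at h
              rw [List.length_append, List.length_append, List.length_singleton]
              omega
            obtain ⟨q, hq1, hq2, hq3⟩ := ih _ hlen hwalk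
            exact ⟨q, hq1, by omega, hq3⟩

end Aux

lemma wstar_weight {V : Type*} {E : Set (V × V)} (w : V × V → ℤ) (n : ℕ) (phi : V → ℤ)
    (wstar : V × V → ℤ)
    (hws : ∀ e : V × V, wstar e = 2 * (n : ℤ) * w e + phi e.1 - phi e.2 + 1) :
    ∀ (p : List V) (u v : V), IsWalk E u v p →
      walkWeight wstar u p
        = 2 * (n : ℤ) * walkWeight w u p + phi u - phi v + p.length
  | [], u, v, h => by cases h; simp [walkWeight]
  | x :: xs, u, v, h => by
      have ih := wstar_weight w n phi wstar hws xs x v h.2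
      simp only [walkWeight, hws (u, x), ih, List.length_cons]
      push_cast
      ring

/-- The rounding step of `SPMain`: if `2n·w(u,v) + φ(u) - φ(v) ≥ -1` on
every edge and `w*(u,v) = 2n·w(u,v) + φ(u) - φ(v) + 1` (so `w* ≥ 0`), then for every vertex
`v`, `dist_G(s,v) = ⌊(dist_{G*}(s,v) - φ(s) + φ(v)) / (2n)⌋`. -/
theorem spmain_rounding {V : Type*} [Fintype V] (E : Set (V × V)) (w : V × V → ℤ)
    (hnc : ¬ ∃ (u : V) (p : List V), IsWalk E u u p ∧ walkWeight w u p < 0)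
    (s : V) (hreach : ∀ v : V, ∃ p, IsWalk E s v p)
    (n : ℕ) (hn : n = Fintype.card V) (hn1 : 1 ≤ n)
    (phi : V → ℤ)
    (hphi : ∀ e ∈ E, (-1 : ℤ) ≤ 2 * (n : ℤ) * w e + phi e.1 - phi e.2)
    (wstar : V × V → ℤ)
    (hws : ∀ e : V × V, wstar e = 2 * (n : ℤ) * w e + phi e.1 - phi e.2 + 1)
    (dist dists : V → ℤ)
    (hdist : ∀ v : V,
      IsLeast {x : ℤ | ∃ p, IsWalk E s v p ∧ walkWeight w s p = x} (dist v))
    (hdists : ∀ v : V,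
      IsLeast {x : ℤ | ∃ p, IsWalk E s v p ∧ walkWeight wstar s p = x} (dists v)) :
    ∀ v : V, dist v = Int.fdiv (dists v - phi s + phi v) (2 * (n : ℤ)) := by
  intro v
  push_neg at hnc
  have hcyc : ∀ (c : V) (q : List V), IsWalk E c c q → 0 ≤ walkWeight w c q := hnc
  obtain ⟨⟨p₀, hp₀w, hp₀⟩, hmin⟩ := hdist v
  obtain ⟨⟨p₁, hp₁w, hp₁⟩, hmins⟩ := hdists v
  obtain ⟨q, hqw, hqle, hqnd⟩ := walk_shorten hcyc p₀.length p₀ le_rfl hp₀w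
  have hqeq : walkWeight w s q = dist v := le_antisymm (hp₀ ▸ hqle) (hmin ⟨q, hqw, rfl⟩)
  have hql : q.length + 1 ≤ n := by
    have := List.Nodup.length_le_card hqnd
    simp at this; omega
  have htel := wstar_weight (E := E) w n phi wstar hws
  have h1 : dists v ≤ 2 * (n : ℤ) * dist v + phi s - phi v + q.length := by
    have := hmins ⟨q, hqw, rfl⟩
    rw [htel q s v hqw, hqeq] at this
    exact this
  have h2 : 2 * (n : ℤ) * dist v + phi s - phi v ≤ dists v := by
    have hW : dist v ≤ walkWeight w s p₁ := hmin ⟨p₁, hp₁w, rfl⟩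
    have := htel p₁ s v hp₁w
    rw [hp₁] at this
    have hn0 : (0 : ℤ) ≤ (n : ℤ) := Int.natCast_nonneg n
    nlinarith [Int.natCast_nonneg p₁.length]
  set X : ℤ := dists v - phi s + phi v with hX
  have hlb : 2 * (n : ℤ) * dist v ≤ X := by omega
  have hub : X < 2 * (n : ℤ) * (dist v + 1) := by
    have : (q.length : ℤ) + 1 ≤ (n : ℤ) := by exact_mod_cast hql
    nlinarith
  have h2n : (0 : ℤ) < 2 * (n : ℤ) := by positivity
  rw [Int.fdiv_eq_ediv_of_nonneg _ (by omega : (0:ℤ) ≤ 2 * (n : ℤ))]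
  have hXdec : X = (X - 2 * (n : ℤ) * dist v) + 2 * (n : ℤ) * dist v := by ring
  rw [hXdec, Int.add_mul_ediv_left _ (dist v) (by omega : (2 * (n : ℤ)) ≠ 0),
    Int.ediv_eq_zero_of_lt (by omega) (by nlinarith), zero_add]
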